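/- Let n ≥ 2. Assume (i) the Kakeya maximal estimate Kak(n, r) with r = n/(n−1) (the Kakeya maximal operator conjecture), and (ii) Wongkew's inequality: there exists C_W such that for every ε > 0 there is C'_ε with the property that for every D ≥ 1, every nonzero polynomial P : ℝⁿ → ℝ of degree at most D with zero set Z, and every R ≥ 1, the Lebesgue measure of the intersection of the R^{1/2}-neighborhood of Z with a ball of radius R is at most C'_ε D^{C_W} R^{n − 1/2 + ε}. Then there exists C such that for every ε > 0 there is C_ε with: for every R ≥ 1, D ≥ 1, every nonzero polynomial P : ℝⁿ → ℝ of degree at most D with zero set Z, and every finite collection Ω of (R^{1/2}, R)-tubes contained in a ball of radius R, having R^{−1/2}-separated directions, each tube contained in the R^{1/2}-neighborhood of Z, one has #Ω ≤ C_ε D^C R^{(n−2)/2 + ε}. -/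

import Mathlib

open MeasureTheory Set

noncomputable section

/-- A tube in ℝⁿ, recorded by its center and unit direction. -/
structure Tube (n : ℕ) where
  center : EuclideanSpace ℝ (Fin n)
  dir : EuclideanSpace ℝ (Fin n)
  norm_dir : ‖dir‖ = 1

/-- The (N₁, N₂)-tube (radius N₁, length N₂) with the given center and direction. -/
def Tube.set {n : ℕ} (N₁ N₂ : ℝ) (T : Tube n) : Set (EuclideanSpace ℝ (Fin n)) :=
  {x | |(inner ℝ (x - T.center) T.dir : ℝ)| ≤ N₂ / 2 ∧
    ‖x - T.center - (inner ℝ (x - T.center) T.dir : ℝ) • T.dir‖ ≤ N₁}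

/-- Kak(n, r): the Kakeya maximal estimate
‖Σ_{T∈Ω} 1_T‖_{L^r(ℝⁿ)} ≤ C_ε δ^{−ε} (Σ_{T∈Ω} |T|)^{1/r} δ^{n/r − (n−1)}
for collections Ω of (δ,1)-tubes with δ-separated directions. -/
def KakMax (n : ℕ) (r : ℝ) : Prop :=
  ∀ ε : ℝ, 0 < ε → ∃ Cε > 0, ∀ δ : ℝ, 0 < δ → δ < 1 → ∀ Ω : Finset (Tube n),
    (∀ T ∈ Ω, ∀ T' ∈ Ω, T ≠ T' → δ ≤ dist T.dir T'.dir) →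
    eLpNorm (fun x => ∑ T ∈ Ω, (Tube.set δ 1 T).indicator (fun _ => (1 : ℝ)) x)
        (ENNReal.ofReal r) volume
      ≤ ENNReal.ofReal (Cε * δ ^ (-ε) *
          (∑ T ∈ Ω, (volume (Tube.set δ 1 T)).toReal) ^ (1 / r) *
          δ ^ ((n : ℝ) / r - ((n : ℝ) - 1)))

/-- Wongkew's inequality in ℝⁿ: the R^{1/2}-neighborhood of the zero set of a nonzero
polynomial of degree ≤ D meets any R-ball in measure at most C'_ε D^{C_W} R^{n−1/2+ε}. -/
def Wongkew (n : ℕ) : Prop :=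
  ∃ C_W > 0, ∀ ε : ℝ, 0 < ε → ∃ C'ε > 0, ∀ D : ℕ, 1 ≤ D →
    ∀ P : MvPolynomial (Fin n) ℝ, P ≠ 0 → P.totalDegree ≤ D →
    ∀ R : ℝ, 1 ≤ R → ∀ x₀ : EuclideanSpace ℝ (Fin n),
      volume (Metric.cthickening (Real.sqrt R)
          {x : EuclideanSpace ℝ (Fin n) | MvPolynomial.eval (fun i => x i) P = 0} ∩
        Metric.closedBall x₀ R)
        ≤ ENNReal.ofReal (C'ε * (D : ℝ) ^ C_W * R ^ ((n : ℝ) - 1 / 2 + ε))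

end

/-!
Rescaling by `R⁻¹` turns the tubes into `(δ, 1)`-tubes with `δ ≈ R^{-1/2}` and `δ`-separated
directions, all contained in `U = R⁻¹ • (N_{√R}(Z) ∩ B(x₀, R))`, whose volume is
`≲ D^{C_W} R^{-1/2+ε}` by Wongkew's inequality. Hölder's inequality against `1_U` and the Kakeya
estimate at the critical exponent `r = n / (n - 1)`, where the power of `δ` vanishes, give
`Σ |T| = ‖Σ 1_T‖₁ ≤ ‖Σ 1_T‖_r |U|^{1/n} ≲ δ^{-ε} (Σ |T|)^{1 - 1/n} |U|^{1/n}`, i.e.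
`Σ |T| ≲ δ^{-ε} |U|`. Since every tube has volume `≳ δ^{n-1}`, this yields
`#Ω ≲ δ^{-(n-1)-ε} |U| ≲ D^{C_W} R^{(n-2)/2+ε}`.
-/

open Metric Pointwise

theorem norm_sub_inner_smul_le {E : Type*} [NormedAddCommGroup E] [InnerProductSpace ℝ E]
    {u : E} (hu : ‖u‖ = 1) (y : E) : ‖y - (inner ℝ y u : ℝ) • u‖ ≤ ‖y‖ := by
  refine sq_le_sq₀ (norm_nonneg _) (norm_nonneg _) |>.1 ?_
  rw [norm_sub_sq_real, norm_smul, real_inner_smul_right, hu, Real.norm_eq_abs, mul_one, sq_abs]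
  nlinarith [sq_nonneg (inner ℝ y u : ℝ)]

theorem card_mul_measure_ball_le {E : Type*} [NormedAddCommGroup E] [MeasurableSpace E]
    [BorelSpace E] (μ : Measure E) [μ.IsAddHaarMeasure] {ι : Type*}
    (s : Finset ι) (c : ι → E) {r : ℝ} {S : Set E}
    (hsep : ∀ i ∈ s, ∀ j ∈ s, i ≠ j → r + r ≤ dist (c i) (c j))
    (hS : ∀ i ∈ s, ball (c i) r ⊆ S) :
    s.card * μ (ball 0 r) ≤ μ S :=
  calc s.card * μ (ball 0 r) = ∑ i ∈ s, μ (ball (c i) r) := by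
        simp [Measure.addHaar_ball_center]
    _ = μ (⋃ i ∈ s, ball (c i) r) :=
        (measure_biUnion_finset (fun i hi j hj hij => ball_disjoint_ball (hsep i hi j hj hij))
          fun _ _ => measurableSet_ball).symm
    _ ≤ μ S := measure_mono (iUnion₂_subset hS)

theorem eLpNorm_le_eLpNorm_mul_measure_rpow {α E : Type*} [MeasurableSpace α]
    [NormedAddCommGroup E] {μ : Measure α} {f : α → E} {s : Set α} {p q : ENNReal}
    (hpq : p ≤ q) (hf : AEStronglyMeasurable f μ) (hfs : Function.support f ⊆ s) :
    eLpNorm f p μ ≤ eLpNorm f q μ * μ s ^ (1 / p.toReal - 1 / q.toReal) := by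
  rw [← eLpNorm_restrict_eq_of_support_subset hfs, ← Measure.restrict_apply_univ]
  calc eLpNorm f p (μ.restrict s)
      ≤ eLpNorm f q (μ.restrict s) * μ.restrict s univ ^ (1 / p.toReal - 1 / q.toReal) :=
        eLpNorm_le_eLpNorm_mul_rpow_measure_univ hpq hf.restrict
    _ ≤ eLpNorm f q μ * μ.restrict s univ ^ (1 / p.toReal - 1 / q.toReal) := by
        gcongr
        exact Measure.restrict_le_self

theorem eLpNorm_one_sum_indicator_one {α ι : Type*} [MeasurableSpace α] (μ : Measure α)
    (Ω : Finset ι) {s : ι → Set α} (hs : ∀ i ∈ Ω, MeasurableSet (s i)) :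
    eLpNorm (fun x => ∑ i ∈ Ω, (s i).indicator (fun _ => (1 : ℝ)) x) 1 μ = ∑ i ∈ Ω, μ (s i) := by
  have hnonneg : ∀ x, ∀ i ∈ Ω, 0 ≤ (s i).indicator (fun _ => (1 : ℝ)) x :=
    fun x _ _ => indicator_nonneg (fun _ _ => zero_le_one) x
  have henorm : ∀ x, ‖∑ i ∈ Ω, (s i).indicator (fun _ => (1 : ℝ)) x‖ₑ =
      ∑ i ∈ Ω, (s i).indicator 1 x := by
    intro x
    rw [Real.enorm_eq_ofReal (Finset.sum_nonneg (hnonneg x)),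
      ENNReal.ofReal_sum_of_nonneg (hnonneg x)]
    refine Finset.sum_congr rfl fun i _ => ?_
    by_cases hx : x ∈ s i <;> simp [hx]
  simp_rw [eLpNorm_one_eq_lintegral_enorm, henorm]
  rw [lintegral_finsetSum _ fun i hi => measurable_one.indicator (hs i hi)]
  exact Finset.sum_congr rfl fun i hi => lintegral_indicator_one (hs i hi)

theorem le_rpow_mul_of_le_mul_rpow {s K u p : ℝ} (hs : 0 ≤ s) (hK : 0 ≤ K) (hu : 0 ≤ u)
    (hp : 0 < p) (h : s ≤ K * s ^ (1 - p⁻¹) * u ^ p⁻¹) : s ≤ K ^ p * u := by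
  rcases hs.eq_or_lt with rfl | hs
  · positivity
  have hroot : s ^ p⁻¹ ≤ K * u ^ p⁻¹ := by
    have hsplit : s = s ^ (1 - p⁻¹) * s ^ p⁻¹ := by
      rw [← Real.rpow_add hs, sub_add_cancel, Real.rpow_one]
    refine le_of_mul_le_mul_left ?_ (Real.rpow_pos_of_pos hs (1 - p⁻¹))
    calc s ^ (1 - p⁻¹) * s ^ p⁻¹ = s := hsplit.symm
      _ ≤ s ^ (1 - p⁻¹) * (K * u ^ p⁻¹) := by linarith
  calc s = (s ^ p⁻¹) ^ p := by rw [← Real.rpow_mul hs.le, inv_mul_cancel₀ hp.ne', Real.rpow_one]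
    _ ≤ (K * u ^ p⁻¹) ^ p := by gcongr
    _ = K ^ p * u := by
      rw [Real.mul_rpow hK (by positivity), ← Real.rpow_mul hu, inv_mul_cancel₀ hp.ne',
        Real.rpow_one]

theorem inv_two_mul_sqrt_rpow_neg {R : ℝ} (hR : 0 ≤ R) (a : ℝ) :
    ((2 * √R)⁻¹) ^ (-a) = 2 ^ a * R ^ (a / 2) := by
  rw [Real.rpow_neg (by positivity), Real.inv_rpow (by positivity), inv_inv,
    Real.mul_rpow (by norm_num) (Real.sqrt_nonneg R), Real.sqrt_eq_rpow, ← Real.rpow_mul hR]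
  ring_nf

namespace Tube

variable {n : ℕ}

def scale (c : ℝ) (T : Tube n) : Tube n := ⟨c • T.center, T.dir, T.norm_dir⟩

theorem scale_injective {c : ℝ} (hc : c ≠ 0) : Function.Injective (scale (n := n) c) := by
  rintro ⟨a, u, hu⟩ ⟨b, v, hv⟩ h
  simp only [scale, mk.injEq, smul_right_inj hc] at h
  obtain ⟨rfl, rfl⟩ := h
  rfl

theorem isClosed_set (N₁ N₂ : ℝ) (T : Tube n) : IsClosed (T.set N₁ N₂) := by
  have h : Continuous fun x : EuclideanSpace ℝ (Fin n) => (inner ℝ (x - T.center) T.dir : ℝ) :=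
    (continuous_id.sub continuous_const).inner continuous_const
  exact (isClosed_le (continuous_abs.comp h) continuous_const).inter
    (isClosed_le ((continuous_id.sub continuous_const).sub (h.smul continuous_const)).norm
      continuous_const)

theorem measurableSet_set (N₁ N₂ : ℝ) (T : Tube n) : MeasurableSet (T.set N₁ N₂) :=
  (isClosed_set N₁ N₂ T).measurableSet

theorem set_mono {N₁ N₁' : ℝ} (h : N₁ ≤ N₁') (N₂ : ℝ) (T : Tube n) :
    T.set N₁ N₂ ⊆ T.set N₁' N₂ :=
  fun _ hx => ⟨hx.1, hx.2.trans h⟩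

theorem set_subset_closedBall (N₁ N₂ : ℝ) (T : Tube n) :
    T.set N₁ N₂ ⊆ closedBall T.center (N₁ + N₂ / 2) := by
  rintro x ⟨h₂, h₁⟩
  set t : ℝ := inner ℝ (x - T.center) T.dir
  rw [mem_closedBall, dist_eq_norm]
  calc ‖x - T.center‖ = ‖(x - T.center - t • T.dir) + t • T.dir‖ := by rw [sub_add_cancel]
    _ ≤ ‖x - T.center - t • T.dir‖ + ‖t • T.dir‖ := norm_add_le _ _
    _ ≤ N₁ + N₂ / 2 := by
      rw [norm_smul, T.norm_dir, mul_one, Real.norm_eq_abs]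
      exact add_le_add h₁ h₂

theorem volume_set_lt_top (N₁ N₂ : ℝ) (T : Tube n) : volume (T.set N₁ N₂) < ⊤ :=
  (measure_mono (set_subset_closedBall N₁ N₂ T)).trans_lt measure_closedBall_lt_top

theorem smul_mem_set_iff {c : ℝ} (hc : 0 < c) (N₁ N₂ : ℝ) (T : Tube n)
    (x : EuclideanSpace ℝ (Fin n)) :
    c • x ∈ T.set (c * N₁) (c * N₂) ↔ x ∈ (T.scale c⁻¹).set N₁ N₂ := by
  have hx : c • x - T.center = c • (x - c⁻¹ • T.center) := by
    rw [smul_sub, smul_inv_smul₀ hc.ne']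
  have hinner : (inner ℝ (c • x - T.center) T.dir : ℝ) =
      c * inner ℝ (x - c⁻¹ • T.center) T.dir := by
    rw [hx, real_inner_smul_left]
  refine Iff.and ?_ ?_
  · rw [hinner, abs_mul, abs_of_pos hc, mul_div_assoc, mul_le_mul_iff_right₀ hc]
    rfl
  · rw [hinner, hx, ← smul_smul, ← smul_sub, norm_smul, Real.norm_eq_abs, abs_of_pos hc,
      mul_le_mul_iff_right₀ hc]
    rfl

theorem ball_subset_set {N₁ N₂ a r : ℝ} (hr₁ : r ≤ N₁) (hr₂ : |a| + r ≤ N₂ / 2) (T : Tube n) :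
    ball (T.center + a • T.dir) r ⊆ T.set N₁ N₂ := by
  intro x hx
  rw [mem_ball, dist_eq_norm] at hx
  set y := x - (T.center + a • T.dir)
  have hxy : x - T.center = y + a • T.dir := by simp only [y]; abel
  have hinner : (inner ℝ (x - T.center) T.dir : ℝ) = inner ℝ y T.dir + a := by
    rw [hxy, inner_add_left, real_inner_smul_left, real_inner_self_eq_norm_sq, T.norm_dir]
    ring
  refine ⟨?_, ?_⟩
  · calc |(inner ℝ (x - T.center) T.dir : ℝ)| ≤ |(inner ℝ y T.dir : ℝ)| + |a| := by
          rw [hinner]; exact abs_add_le _ _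
      _ ≤ ‖y‖ + |a| := by
          gcongr
          simpa [T.norm_dir] using abs_real_inner_le_norm y T.dir
      _ ≤ N₂ / 2 := by linarith
  · calc ‖x - T.center - (inner ℝ (x - T.center) T.dir : ℝ) • T.dir‖
        = ‖y - (inner ℝ y T.dir : ℝ) • T.dir‖ := by rw [hinner, hxy, add_smul]; abel_nf
      _ ≤ ‖y‖ := norm_sub_inner_smul_le T.norm_dir y
      _ ≤ N₁ := by linarith

theorem natCast_mul_volume_ball_le_volume_set {δ : ℝ} (hδ₀ : 0 < δ) {m : ℕ} (hm : m * δ ≤ 1)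
    (T : Tube n) :
    m * volume (ball (0 : EuclideanSpace ℝ (Fin n)) (δ / 2)) ≤ volume (T.set δ 1) := by
  -- `m` disjoint balls of radius `δ / 2` centred on the axis at spacing `δ`
  set a : ℕ → ℝ := fun k => -(1 / 2) + δ / 2 + δ * k
  have hsep : ∀ j ∈ Finset.range m, ∀ k ∈ Finset.range m, j ≠ k →
      δ / 2 + δ / 2 ≤ dist (T.center + a j • T.dir) (T.center + a k • T.dir) := by
    intro j _ k _ hjk
    have hjk' : (1 : ℝ) ≤ |(j : ℝ) - k| := by
      exact_mod_cast Int.one_le_abs (sub_ne_zero.2 (Int.ofNat_inj.not.2 hjk))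
    rw [dist_add_left, dist_eq_norm, ← sub_smul, norm_smul, T.norm_dir, mul_one,
      Real.norm_eq_abs, show a j - a k = δ * (j - k) by simp only [a]; ring, abs_mul,
      abs_of_pos hδ₀]
    nlinarith
  have hsub : ∀ k ∈ Finset.range m, ball (T.center + a k • T.dir) (δ / 2) ⊆ T.set δ 1 := by
    intro k hk
    have hk : (k : ℝ) + 1 ≤ m := by exact_mod_cast Finset.mem_range.1 hk
    have hak : |a k| ≤ 1 / 2 - δ / 2 := abs_le.2
      ⟨by simp only [a]; nlinarith [Nat.cast_nonneg (α := ℝ) k], by simp only [a]; nlinarith⟩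
    exact ball_subset_set (by linarith) (by linarith) T
  simpa using card_mul_measure_ball_le volume _ _ hsep hsub

theorem ofReal_mul_volume_ball_le_volume_set (hn : 1 ≤ n) {δ : ℝ} (hδ₀ : 0 < δ) (hδ₁ : δ ≤ 1)
    (T : Tube n) :
    ENNReal.ofReal (δ ^ (n - 1) / 2 ^ (n + 1)) *
        volume (ball (0 : EuclideanSpace ℝ (Fin n)) 1) ≤ volume (T.set δ 1) := by
  have : Nonempty (Fin n) := ⟨⟨0, hn⟩⟩
  set m := ⌊δ⁻¹⌋₊
  have hm₁ : (1 : ℝ) ≤ m := by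
    exact_mod_cast (Nat.one_le_floor_iff _).2 (one_le_inv_iff₀.2 ⟨hδ₀, hδ₁⟩)
  have hm : 1 < (m + 1) * δ := (inv_lt_iff_one_lt_mul₀ hδ₀).1 (Nat.lt_floor_add_one _)
  have hmδ : m * δ ≤ 1 :=
    (le_div_iff₀ hδ₀).1 ((Nat.floor_le (by positivity)).trans_eq (one_div δ).symm)
  calc ENNReal.ofReal (δ ^ (n - 1) / 2 ^ (n + 1)) * volume (ball (0 : EuclideanSpace ℝ (Fin n)) 1)
      ≤ m * (ENNReal.ofReal ((δ / 2) ^ n) * volume (ball (0 : EuclideanSpace ℝ (Fin n)) 1)) := by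
        rw [← mul_assoc, ← ENNReal.ofReal_natCast, ← ENNReal.ofReal_mul (by positivity)]
        gcongr
        obtain ⟨k, rfl⟩ : ∃ k, n = k + 1 := ⟨n - 1, by omega⟩
        calc δ ^ (k + 1 - 1) / 2 ^ (k + 1 + 1) = (δ / 2) ^ k * (1 / 4) := by
              rw [Nat.add_sub_cancel, div_pow]; ring
          _ ≤ (δ / 2) ^ k * (m * δ / 2) :=
              mul_le_mul_of_nonneg_left (by nlinarith) (by positivity)
          _ = m * (δ / 2) ^ (k + 1) := by ring
    _ = m * volume (ball (0 : EuclideanSpace ℝ (Fin n)) (δ / 2)) := by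
        rw [Measure.addHaar_ball volume (0 : EuclideanSpace ℝ (Fin n)) (half_pos hδ₀).le,
          finrank_euclideanSpace_fin]
    _ ≤ volume (T.set δ 1) := natCast_mul_volume_ball_le_volume_set hδ₀ hmδ T

end Tube

section

variable {n : ℕ}

def DirSeparated (δ : ℝ) (Ω : Finset (Tube n)) : Prop :=
  ∀ T ∈ Ω, ∀ T' ∈ Ω, T ≠ T' → δ ≤ dist T.dir T'.dir

theorem DirSeparated.mono {δ δ' : ℝ} {Ω : Finset (Tube n)} (h : DirSeparated δ' Ω)
    (hδ : δ ≤ δ') : DirSeparated δ Ω :=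
  fun T hT T' hT' hne => hδ.trans (h T hT T' hT' hne)

theorem DirSeparated.image_scale [DecidableEq (Tube n)] {δ : ℝ} {Ω : Finset (Tube n)}
    (h : DirSeparated δ Ω) (c : ℝ) : DirSeparated δ (Ω.image (Tube.scale c)) := by
  intro _ hS _ hS' hne
  obtain ⟨T, hT, rfl⟩ := Finset.mem_image.1 hS
  obtain ⟨T', hT', rfl⟩ := Finset.mem_image.1 hS'
  exact h T hT T' hT' fun h => hne (h ▸ rfl)

theorem KakMax.sum_volume_le (hn : 2 ≤ n) (hkak : KakMax n ((n : ℝ) / ((n : ℝ) - 1)))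
    {ε : ℝ} (hε : 0 < ε) :
    ∃ C > 0, ∀ δ : ℝ, 0 < δ → δ < 1 → ∀ (Ω : Finset (Tube n))
      (U : Set (EuclideanSpace ℝ (Fin n))), volume U ≠ ⊤ → DirSeparated δ Ω →
      (∀ T ∈ Ω, T.set δ 1 ⊆ U) →
      ∑ T ∈ Ω, (volume (T.set δ 1)).toReal ≤ C * δ ^ (-ε) * (volume U).toReal := by
  have hn₁ : (1 : ℝ) < n := by exact_mod_cast hn
  set r : ℝ := (n : ℝ) / ((n : ℝ) - 1)
  have hr₁ : 1 ≤ r := by rw [le_div_iff₀ (by linarith)]; linarith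
  have hr_inv : 1 / r = 1 - (n : ℝ)⁻¹ := by simp only [r]; field_simp
  have hr_crit : (n : ℝ) / r - ((n : ℝ) - 1) = 0 := by simp only [r]; field_simp; ring
  obtain ⟨C, hC, hK⟩ := hkak (ε / n) (by positivity)
  refine ⟨C ^ (n : ℝ), by positivity, fun δ hδ₀ hδ₁ Ω U hU hsep hsub => ?_⟩
  set F := fun x => ∑ T ∈ Ω, (T.set δ 1).indicator (fun _ => (1 : ℝ)) x
  set s := ∑ T ∈ Ω, (volume (T.set δ 1)).toReal with hs_def
  have hs : ENNReal.ofReal s = eLpNorm F 1 volume := by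
    rw [eLpNorm_one_sum_indicator_one _ _ fun T _ => T.measurableSet_set δ 1, hs_def,
      ← ENNReal.toReal_sum fun T _ => (Tube.volume_set_lt_top δ 1 T).ne, ENNReal.ofReal_toReal
        (ENNReal.sum_ne_top.2 fun T _ => (Tube.volume_set_lt_top δ 1 T).ne)]
  have hF : AEStronglyMeasurable F volume :=
    (Finset.measurable_sum _ fun T _ =>
      measurable_const.indicator (T.measurableSet_set δ 1)).aestronglyMeasurable
  have hFU : Function.support F ⊆ U := by
    intro x hx
    obtain ⟨T, hT, hxT⟩ := Finset.exists_ne_zero_of_sum_ne_zero hx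
    exact hsub T hT (Set.mem_of_indicator_ne_zero hxT)
  have hholder := eLpNorm_le_eLpNorm_mul_measure_rpow (ENNReal.one_le_ofReal.2 hr₁) hF hFU
  rw [ENNReal.toReal_one, ENNReal.toReal_ofReal (by linarith), hr_inv, div_one,
    sub_sub_cancel] at hholder
  have hkak' := hK δ hδ₀ hδ₁ Ω hsep
  rw [hr_crit, Real.rpow_zero, mul_one, hr_inv] at hkak'
  have hmain : s ≤ (C * δ ^ (-(ε / n))) * s ^ (1 - (n : ℝ)⁻¹) * (volume U).toReal ^ (n : ℝ)⁻¹ := by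
    have : ENNReal.ofReal s ≤ ENNReal.ofReal (C * δ ^ (-(ε / n)) * s ^ (1 - (n : ℝ)⁻¹) *
        (volume U).toReal ^ (n : ℝ)⁻¹) := by
      rw [ENNReal.ofReal_mul (by positivity), ← ENNReal.ofReal_rpow_of_nonneg ENNReal.toReal_nonneg
        (by positivity), ENNReal.ofReal_toReal hU, hs]
      exact hholder.trans (mul_le_mul_left hkak' _)
    exact (ENNReal.ofReal_le_ofReal_iff (by positivity)).1 this
  calc s ≤ (C * δ ^ (-(ε / n))) ^ (n : ℝ) * (volume U).toReal :=
        le_rpow_mul_of_le_mul_rpow (by positivity) (by positivity) ENNReal.toReal_nonneg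
          (by positivity) hmain
    _ = C ^ (n : ℝ) * δ ^ (-ε) * (volume U).toReal := by
        rw [Real.mul_rpow hC.le (by positivity), ← Real.rpow_mul hδ₀.le,
          neg_mul, div_mul_cancel₀ ε (by positivity : (n : ℝ) ≠ 0)]

theorem KakMax.card_le (hn : 2 ≤ n) (hkak : KakMax n ((n : ℝ) / ((n : ℝ) - 1)))
    {ε : ℝ} (hε : 0 < ε) :
    ∃ C > 0, ∀ δ : ℝ, 0 < δ → δ < 1 → ∀ (Ω : Finset (Tube n))
      (U : Set (EuclideanSpace ℝ (Fin n))), volume U ≠ ⊤ → DirSeparated δ Ω →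
      (∀ T ∈ Ω, T.set δ 1 ⊆ U) →
      (Ω.card : ℝ) ≤ C * δ ^ (-((n : ℝ) - 1 + ε)) * (volume U).toReal := by
  obtain ⟨C, hC, hK⟩ := KakMax.sum_volume_le hn hkak hε
  have : Nonempty (Fin n) := ⟨⟨0, by omega⟩⟩
  set B := (volume (ball (0 : EuclideanSpace ℝ (Fin n)) 1)).toReal
  have hB : 0 < B := ENNReal.toReal_pos (measure_ball_pos volume 0 one_pos).ne'
    measure_ball_lt_top.ne
  refine ⟨C * (2 ^ (n + 1) / B), by positivity, fun δ hδ₀ hδ₁ Ω U hU hsep hsub => ?_⟩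
  set c := δ ^ (n - 1) / 2 ^ (n + 1) * B
  have hc : 0 < c := by positivity
  have hlow : ∀ T : Tube n, c ≤ (volume (T.set δ 1)).toReal := fun T => by
    have := ENNReal.toReal_mono (T.volume_set_lt_top δ 1).ne
      (T.ofReal_mul_volume_ball_le_volume_set (by omega) hδ₀ hδ₁.le)
    rwa [ENNReal.toReal_mul, ENNReal.toReal_ofReal (by positivity)] at this
  have hcard : Ω.card * c ≤ C * δ ^ (-ε) * (volume U).toReal :=
    calc Ω.card * c = ∑ T ∈ Ω, c := by rw [Finset.sum_const, nsmul_eq_mul]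
      _ ≤ ∑ T ∈ Ω, (volume (T.set δ 1)).toReal := Finset.sum_le_sum fun T _ => hlow T
      _ ≤ C * δ ^ (-ε) * (volume U).toReal := hK δ hδ₀ hδ₁ Ω U hU hsep hsub
  have hδpow : δ ^ (-((n : ℝ) - 1 + ε)) = δ ^ (-ε) / δ ^ (n - 1) := by
    rw [← Real.rpow_natCast, Nat.cast_sub (by omega), Nat.cast_one, ← Real.rpow_sub hδ₀]
    ring_nf
  calc (Ω.card : ℝ) ≤ C * δ ^ (-ε) * (volume U).toReal / c := (le_div_iff₀ hc).2 hcard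
    _ = C * (2 ^ (n + 1) / B) * δ ^ (-((n : ℝ) - 1 + ε)) * (volume U).toReal := by
      rw [hδpow]; simp only [c]; field_simp

theorem KakMax.card_le_of_scale (hn : 2 ≤ n)
    (hkak : KakMax n ((n : ℝ) / ((n : ℝ) - 1))) {ε : ℝ} (hε : 0 < ε) :
    ∃ C > 0, ∀ R : ℝ, 1 ≤ R → ∀ (Ω : Finset (Tube n))
      (U : Set (EuclideanSpace ℝ (Fin n))), volume U ≠ ⊤ → DirSeparated (√R)⁻¹ Ω →
      (∀ T ∈ Ω, T.set (√R) R ⊆ U) →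
      (Ω.card : ℝ) ≤ C * R ^ ((ε - n - 1) / 2) * (volume U).toReal := by
  classical
  obtain ⟨C, hC, hK⟩ := KakMax.card_le hn hkak hε
  refine ⟨C * 2 ^ ((n : ℝ) - 1 + ε), by positivity, fun R hR Ω U hU hsep hsub => ?_⟩
  have hR₀ : 0 < R := by linarith
  have hsR : 1 ≤ √R := Real.one_le_sqrt.2 hR
  -- not `(√R)⁻¹`: the Kakeya estimate needs `δ < 1`, also when `R = 1`
  set δ := (2 * √R)⁻¹
  have hδ : δ ≤ (√R)⁻¹ := inv_anti₀ (by positivity) (by linarith)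
  have hδ₁ : δ < 1 := inv_lt_one_of_one_lt₀ (by linarith)
  have hsub' : ∀ T ∈ Ω.image (Tube.scale R⁻¹), T.set δ 1 ⊆ R⁻¹ • U := by
    simp only [Finset.mem_image]
    rintro _ ⟨T, hT, rfl⟩ x hx
    have hRx : R • x ∈ T.set (R * (√R)⁻¹) (R * 1) :=
      (T.smul_mem_set_iff hR₀ _ _ x).2 (Tube.set_mono hδ 1 _ hx)
    rw [← div_eq_mul_inv, Real.div_sqrt, mul_one] at hRx
    exact (Set.mem_inv_smul_set_iff₀ hR₀.ne' U x).2 (hsub T hT hRx)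
  have hvol : volume (R⁻¹ • U) = ENNReal.ofReal (R ^ (-(n : ℝ))) * volume U := by
    rw [Measure.addHaar_smul, finrank_euclideanSpace_fin, abs_of_pos (by positivity),
      Real.rpow_neg hR₀.le, Real.rpow_natCast, inv_pow]
  have hvol_ne_top : volume (R⁻¹ • U) ≠ ⊤ := by
    rw [hvol]; exact ENNReal.mul_ne_top ENNReal.ofReal_ne_top hU
  calc (Ω.card : ℝ) = (Ω.image (Tube.scale R⁻¹)).card := by
        rw [Finset.card_image_of_injective _ (Tube.scale_injective (inv_ne_zero hR₀.ne'))]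
    _ ≤ C * δ ^ (-((n : ℝ) - 1 + ε)) * (volume (R⁻¹ • U)).toReal :=
        hK δ (by positivity) hδ₁ _ _ hvol_ne_top ((hsep.image_scale R⁻¹).mono hδ) hsub'
    _ = C * 2 ^ ((n : ℝ) - 1 + ε) * (R ^ (((n : ℝ) - 1 + ε) / 2) * R ^ (-(n : ℝ))) *
          (volume U).toReal := by
        rw [inv_two_mul_sqrt_rpow_neg hR₀.le, hvol, ENNReal.toReal_mul,
          ENNReal.toReal_ofReal (by positivity)]
        ring
    _ = C * 2 ^ ((n : ℝ) - 1 + ε) * R ^ ((ε - n - 1) / 2) * (volume U).toReal := by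
        rw [← Real.rpow_add hR₀]; ring_nf

end

/-- the Kakeya maximal operator conjecture (r = n/(n−1)) together with
Wongkew's inequality implies the tangent-tube bound #Ω ≲ D^C R^{(n−2)/2 + ε}. -/
theorem stmt7 (n : ℕ) (hn : 2 ≤ n)
    (hkak : KakMax n ((n : ℝ) / ((n : ℝ) - 1))) (hwong : Wongkew n) :
    ∃ C > 0, ∀ ε : ℝ, 0 < ε → ∃ Cε > 0, ∀ R : ℝ, 1 ≤ R → ∀ D : ℕ, 1 ≤ D →
      ∀ P : MvPolynomial (Fin n) ℝ, P ≠ 0 → P.totalDegree ≤ D →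
      ∀ Ω : Finset (Tube n), ∀ x₀ : EuclideanSpace ℝ (Fin n),
        (∀ T ∈ Ω, Tube.set (Real.sqrt R) R T ⊆ Metric.closedBall x₀ R) →
        (∀ T ∈ Ω, ∀ T' ∈ Ω, T ≠ T' → (Real.sqrt R)⁻¹ ≤ dist T.dir T'.dir) →
        (∀ T ∈ Ω, Tube.set (Real.sqrt R) R T ⊆
          Metric.cthickening (Real.sqrt R)
            {x : EuclideanSpace ℝ (Fin n) | MvPolynomial.eval (fun i => x i) P = 0}) →
        (Ω.card : ℝ) ≤ Cε * (D : ℝ) ^ C * R ^ (((n : ℝ) - 2) / 2 + ε) := by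
  obtain ⟨CW, hCW, hW⟩ := hwong
  refine ⟨CW, hCW, fun ε hε => ?_⟩
  obtain ⟨C, hC, hK⟩ := KakMax.card_le_of_scale hn hkak hε
  obtain ⟨C', hC', hW'⟩ := hW (ε / 2) (half_pos hε)
  refine ⟨C * C', by positivity, fun R hR D hD P hP hPdeg Ω x₀ hball hsep htang => ?_⟩
  set U := cthickening √R {x : EuclideanSpace ℝ (Fin n) | MvPolynomial.eval (fun i => x i) P = 0}
    ∩ closedBall x₀ R
  have hU : volume U ≠ ⊤ :=
    ((measure_mono inter_subset_right).trans_lt measure_closedBall_lt_top).ne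
  calc (Ω.card : ℝ) ≤ C * R ^ ((ε - n - 1) / 2) * (volume U).toReal :=
        hK R hR Ω U hU hsep fun T hT => subset_inter (htang T hT) (hball T hT)
    _ ≤ C * R ^ ((ε - n - 1) / 2) * (C' * D ^ CW * R ^ ((n : ℝ) - 1 / 2 + ε / 2)) := by
        gcongr
        exact ENNReal.toReal_le_of_le_ofReal (by positivity) (hW' D hD P hP hPdeg R hR x₀)
    _ = C * C' * D ^ CW * (R ^ ((ε - n - 1) / 2) * R ^ ((n : ℝ) - 1 / 2 + ε / 2)) := by ring
    _ = C * C' * D ^ CW * R ^ (((n : ℝ) - 2) / 2 + ε) := by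
        rw [← Real.rpow_add (by linarith)]; ring_nf
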